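/- Let C be a small ℂ-linear category and n ≥ 0. Define B₀ : CN^{n+1}(C) → CN^n(C) by (B₀φ)(f⁰⊗…⊗f^n) := φ(id_{X₀}⊗f⁰⊗…⊗f^n) − (−1)^{n+1} φ(f⁰⊗…⊗f^n⊗id_{X₀}), and B := A∘B₀ where A := 1 + λ_n + … + λ_n^n. Then the image of B : CN^{n+1}(C) → CN^n(C) is exactly C^n_λ(C) = Ker(1−λ_n). In particular, for every φ ∈ C^n_λ(C) there is ψ ∈ CN^{n+1}(C) with Bψ = 2(n+1)φ. -/

import Mathlib

open CategoryTheory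

noncomputable section

namespace CFM

universe v u

variable (C : Type u) [Category.{v} C]

/-- A composable chain of morphisms `(f⁰, f¹, …, fⁿ)` with `fⁱ : Xᵢ₊₁ ⟶ Xᵢ`;
`Chain C X Y` consists of chains with innermost source `X` and outermost target `Y`;
`f⁰` is the outermost morphism. -/
inductive Chain : C → C → Type (max u v)
  | single : {X Y : C} → (X ⟶ Y) → Chain X Y
  | cons : {X Y Z : C} → (Y ⟶ Z) → Chain X Y → Chain X Z

namespace Chain

variable {C}

/-- Number of morphisms in the chain. -/
def size : {X Y : C} → Chain C X Y → ℕ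
  | _, _, single _ => 1
  | _, _, cons _ c => c.size + 1

theorem one_le_size {X Y : C} (c : Chain C X Y) : 1 ≤ c.size := by
  induction c with
  | single f => simp [size]
  | cons f c ih => simp [size]

/-- Append a morphism at the inner end of a chain. -/
def snoc : {V X Y : C} → Chain C X Y → (V ⟶ X) → Chain C V Y
  | _, _, _, single f, g => cons f (single g)
  | _, _, _, cons f c, g => cons f (snoc c g)

/-- Compose the morphisms in slots `i` and `i+1` of the chain (`fⁱ ∘ fⁱ⁺¹`). -/
def composeAt : {X Y : C} → ℕ → Chain C X Y → Chain C X Y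
  | _, _, _, single f => single f
  | _, _, 0, cons f (single g) => single (g ≫ f)
  | _, _, 0, cons f (cons g c) => cons (g ≫ f) c
  | _, _, (i+1), cons f c => cons f (composeAt i c)

end Chain

/-- A cyclically composable tuple `(f⁰, …, fⁿ)`, i.e. an element of the cyclic nerve:
a chain from some object back to itself. -/
def CycChain := Σ X : C, Chain C X X

/-- A function on the cyclic nerve of `C`; an element of `CN^n(C)` is (the multilinear
extension of) such a function, evaluated on tuples of size `n+1`. -/
def Cochain := CycChain C → ℂ

variable {C}

/-- The inverse cyclic rotation `(f⁰, …, fⁿ) ↦ (f¹, …, fⁿ, f⁰)`. -/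
def rotInv : CycChain C → CycChain C
  | ⟨X, Chain.single f⟩ => ⟨X, Chain.single f⟩
  | ⟨_, Chain.cons f c⟩ => ⟨_, c.snoc f⟩

/-- The cyclic rotation `(f⁰, …, fⁿ) ↦ (fⁿ, f⁰, …, fⁿ⁻¹)`. -/
def rot (t : CycChain C) : CycChain C := rotInv^[t.2.size - 1] t

/-- The (unsigned) cyclic operator: `(τφ)(f⁰⊗…⊗fⁿ) = φ(fⁿ⊗f⁰⊗…⊗fⁿ⁻¹)`. -/
def tauOp (φ : Cochain C) : Cochain C := fun t => φ (rot t)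

/-- The signed cyclic operator `λₙ = (-1)ⁿ τₙ` on `CN^n(C)`. -/
def lamOp (n : ℕ) (φ : Cochain C) : Cochain C := fun t => (-1 : ℂ) ^ n * φ (rot t)

/-- The operator `A = 1 + λₙ + λₙ² + ⋯ + λₙⁿ` on `CN^n(C)`. -/
def AOp (n : ℕ) (φ : Cochain C) : Cochain C :=
  fun t => ∑ k ∈ Finset.range (n + 1), (-1 : ℂ) ^ (n * k) * φ (rot^[k] t)

/-- The Hochschild coboundary `b : CN^n(C) → CN^{n+1}(C)`:
`(bφ)(f⁰⊗…⊗fⁿ⁺¹) = Σᵢ (-1)ⁱ φ(f⁰⊗…⊗fⁱfⁱ⁺¹⊗…⊗fⁿ⁺¹) + (-1)ⁿ⁺¹ φ(fⁿ⁺¹f⁰⊗f¹⊗…⊗fⁿ)`. -/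
def bOp (n : ℕ) (φ : Cochain C) : Cochain C := fun t =>
  (∑ i ∈ Finset.range (n + 1), (-1 : ℂ) ^ i * φ ⟨t.1, Chain.composeAt i t.2⟩) +
    (-1 : ℂ) ^ (n + 1) * φ ⟨(rot t).1, Chain.composeAt 0 (rot t).2⟩

/-- The truncated Hochschild coboundary `b'` (the last, cyclic, face omitted). -/
def b'Op (n : ℕ) (φ : Cochain C) : Cochain C := fun t =>
  ∑ i ∈ Finset.range (n + 1), (-1 : ℂ) ^ i * φ ⟨t.1, Chain.composeAt i t.2⟩

/-- The operator `B₀ : CN^{n+1}(C) → CN^n(C)`: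
`(B₀φ)(f⁰⊗…⊗fⁿ) = φ(id⊗f⁰⊗…⊗fⁿ) - (-1)ⁿ⁺¹ φ(f⁰⊗…⊗fⁿ⊗id)`. -/
def B0Op (n : ℕ) (φ : Cochain C) : Cochain C := fun t =>
  φ ⟨t.1, Chain.cons (𝟙 t.1) t.2⟩ - (-1 : ℂ) ^ (n + 1) * φ ⟨t.1, t.2.snoc (𝟙 t.1)⟩

/-- Connes' operator `B = A ∘ B₀ : CN^{n+1}(C) → CN^n(C)`. -/
def BOp (n : ℕ) (φ : Cochain C) : Cochain C := AOp n (B0Op n φ)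

/-- Additivity and ℂ-homogeneity of a cochain in the outermost (0-th) slot. -/
def MultilinAt0 [Preadditive C] [CategoryTheory.Linear ℂ C] (φ : Cochain C) : Prop :=
  (∀ {X Y : C} (f g : Y ⟶ X) (c : Chain C X Y),
      φ ⟨X, Chain.cons (f + g) c⟩ = φ ⟨X, Chain.cons f c⟩ + φ ⟨X, Chain.cons g c⟩) ∧
  (∀ {X Y : C} (a : ℂ) (f : Y ⟶ X) (c : Chain C X Y),
      φ ⟨X, Chain.cons (a • f) c⟩ = a * φ ⟨X, Chain.cons f c⟩) ∧
  (∀ {X : C} (f g : X ⟶ X),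
      φ ⟨X, Chain.single (f + g)⟩ = φ ⟨X, Chain.single f⟩ + φ ⟨X, Chain.single g⟩) ∧
  (∀ {X : C} (a : ℂ) (f : X ⟶ X),
      φ ⟨X, Chain.single (a • f)⟩ = a * φ ⟨X, Chain.single f⟩)

/-- A function on the cyclic nerve is a genuine cochain (an element of the dual
`CN^•(C)` of the cyclic nerve) iff it is ℂ-multilinear in every slot. -/
def IsCochain [Preadditive C] [CategoryTheory.Linear ℂ C] (φ : Cochain C) : Prop :=
  ∀ k : ℕ, MultilinAt0 fun t => φ (rotInv^[k] t)

/-!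
On chains of length `n + 1`, `rot^[n+1]` is the identity and `(-1) ^ (n (n + 1)) = 1`, so
`λⁿ⁺¹ = 1` and hence `λ ∘ A = A`: every `Bψ` is cyclic. Conversely, for cyclic `φ` let
`ψ(f⁰ ⊗ ⋯ ⊗ fⁿ⁺¹) = (-1)ⁿ φ(fⁿ⁺¹f⁰ ⊗ f¹ ⊗ ⋯ ⊗ fⁿ)`. Inserting an identity at either end and
composing it away again gives `B₀ψ = λφ + φ = 2φ`, so `Bψ = A(2φ) = 2(n + 1)φ`.

Multilinearity is checked one slot at a time: rotating, inserting an identity and composing two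
adjacent morphisms all turn a family of chains varying in one slot into another such family, up to
a linear map applied to the varying morphism.
-/

-- Lets `⟨X, c⟩` be used at type `CycChain C`.
attribute [reducible] CycChain

namespace Chain

def append {X Y Z : C} : Chain C Y Z → Chain C X Y → Chain C X Z
  | single f, d => cons f d
  | cons f c, d => cons f (c.append d)

theorem size_append {X Y Z : C} (c : Chain C Y Z) (d : Chain C X Y) :
    (c.append d).size = c.size + d.size := by
  induction c with
  | single f => simp only [append, size]; omega
  | cons f c ih => simp only [append, size, ih]; omega

theorem snoc_eq_append {V X Y : C} (c : Chain C X Y) (g : V ⟶ X) :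
    c.snoc g = c.append (single g) := by
  induction c with
  | single f => simp only [snoc, append]
  | cons f c ih => simp only [snoc, append, ih]

theorem size_snoc {V X Y : C} (c : Chain C X Y) (g : V ⟶ X) :
    (c.snoc g).size = c.size + 1 := by
  rw [snoc_eq_append, size_append, size]

theorem append_snoc {W X Y Z : C} (c : Chain C Y Z) (d : Chain C X Y) (g : W ⟶ X) :
    (c.append d).snoc g = c.append (d.snoc g) := by
  induction c with
  | single f => simp only [append, snoc]
  | cons f c ih => simp only [append, snoc, ih]

theorem snoc_append {W X Y Z : C} (c : Chain C Y Z) (f : X ⟶ Y) (d : Chain C W X) :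
    (c.snoc f).append d = c.append (cons f d) := by
  induction c with
  | single g => simp only [snoc, append]
  | cons g c ih => simp only [snoc, append, ih]

theorem eq_single_or_eq_snoc {X Y : C} (c : Chain C X Y) :
    (∃ f : X ⟶ Y, c = single f) ∨ ∃ (W : C) (d : Chain C W Y) (g : X ⟶ W), c = d.snoc g := by
  induction c with
  | single f => exact .inl ⟨f, rfl⟩
  | cons f c ih =>
    rcases ih with ⟨g, rfl⟩ | ⟨W, d, g, rfl⟩
    · exact .inr ⟨_, single f, g, by simp only [snoc]⟩
    · exact .inr ⟨_, cons f d, g, by simp only [snoc]⟩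

end Chain

open Chain

theorem rotInv_cons {X Y : C} (f : Y ⟶ X) (c : Chain C X Y) :
    rotInv ⟨X, cons f c⟩ = ⟨Y, c.snoc f⟩ := rfl

theorem rotInv_iterate_single (k : ℕ) {X : C} (f : X ⟶ X) :
    rotInv^[k] ⟨X, single f⟩ = ⟨X, single f⟩ :=
  Function.iterate_fixed rfl k

theorem size_rotInv (t : CycChain C) : (rotInv t).2.size = t.2.size := by
  obtain ⟨X, c⟩ := t
  cases c with
  | single f => rfl
  | cons f c => rw [rotInv_cons, size_snoc, size]

theorem size_rotInv_iterate (k : ℕ) (t : CycChain C) : (rotInv^[k] t).2.size = t.2.size := by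
  induction k with
  | zero => rfl
  | succ k ih => rw [Function.iterate_succ_apply', size_rotInv, ih]

theorem size_rot (t : CycChain C) : (rot t).2.size = t.2.size :=
  size_rotInv_iterate _ t

theorem size_rot_iterate (k : ℕ) (t : CycChain C) : (rot^[k] t).2.size = t.2.size := by
  induction k with
  | zero => rfl
  | succ k ih => rw [Function.iterate_succ_apply', size_rot, ih]

theorem rotInv_iterate_append {X Y : C} (c : Chain C Y X) (d : Chain C X Y) :
    rotInv^[c.size] ⟨X, c.append d⟩ = ⟨Y, d.append c⟩ := by
  induction c with
  | single f => rw [size, append, Function.iterate_one, rotInv_cons, snoc_eq_append]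
  | cons f c ih =>
    rw [size, Function.iterate_succ_apply, append, rotInv_cons, append_snoc, ih, snoc_append]

theorem rotInv_iterate_size (t : CycChain C) : rotInv^[t.2.size] t = t := by
  obtain ⟨X, c⟩ := t
  cases c with
  | single f => exact rotInv_iterate_single _ f
  | cons f c =>
    rw [size, Function.iterate_succ_apply, rotInv_cons, snoc_eq_append]
    exact rotInv_iterate_append c (single f)

theorem rot_iterate_eq (k : ℕ) (t : CycChain C) :
    rot^[k] t = rotInv^[(t.2.size - 1) * k] t := by
  induction k generalizing t with
  | zero => rfl
  | succ k ih =>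
    rw [Function.iterate_succ_apply, ih, size_rot, rot, ← Function.iterate_add_apply, mul_add_one,
      add_comm]

theorem rot_iterate_size (t : CycChain C) : rot^[t.2.size] t = t := by
  rw [rot_iterate_eq, mul_comm, Function.iterate_mul,
    Function.iterate_fixed (rotInv_iterate_size t)]

theorem rot_snoc {X Y : C} (d : Chain C X Y) (g : Y ⟶ X) :
    rot ⟨Y, d.snoc g⟩ = ⟨X, cons g d⟩ := by
  unfold rot
  rw [size_snoc, Nat.add_sub_cancel, snoc_eq_append]
  exact rotInv_iterate_append d (single g)

def consId (t : CycChain C) : CycChain C := ⟨t.1, cons (𝟙 t.1) t.2⟩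

def snocId (t : CycChain C) : CycChain C := ⟨t.1, t.2.snoc (𝟙 t.1)⟩

def composeHead (t : CycChain C) : CycChain C := ⟨t.1, t.2.composeAt 0⟩

theorem rot_snocId (t : CycChain C) : rot (snocId t) = consId t :=
  rot_snoc t.2 (𝟙 t.1)

theorem composeHead_consId (t : CycChain C) : composeHead (consId t) = t := by
  obtain ⟨X, c⟩ := t
  cases c <;> simp [composeHead, consId, composeAt]

theorem composeHead_rot_consId (t : CycChain C) : composeHead (rot (consId t)) = rot t := by
  obtain ⟨X, c⟩ := t
  rcases eq_single_or_eq_snoc c with ⟨f, rfl⟩ | ⟨W, d, g, rfl⟩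
  · rw [show consId ⟨X, single f⟩ = ⟨X, (single (𝟙 X)).snoc f⟩ by simp [consId, snoc], rot_snoc]
    simp [composeHead, composeAt, rot, size]
  · rw [show consId ⟨X, d.snoc g⟩ = ⟨X, (cons (𝟙 X) d).snoc g⟩ by simp [consId, snoc], rot_snoc,
      rot_snoc]
    simp [composeHead, composeAt]

section Slots

variable [Preadditive C] [Linear ℂ C]

/-- `S u` is a cyclic chain in which `u`, or a linear function of it, fills one fixed slot. -/
inductive IsSlot : {X Y : C} → ((Y ⟶ X) → CycChain C) → Prop
  | single {X : C} : IsSlot fun u : X ⟶ X => ⟨X, single u⟩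
  | head {X Y : C} (c : Chain C X Y) : IsSlot fun u => ⟨X, cons u c⟩
  | inner {P V W : C} (e : Chain C V W) (d : Chain C W P) :
      IsSlot fun u : P ⟶ V => ⟨W, e.append (cons u d)⟩
  | last {V W : C} (e : Chain C V W) : IsSlot fun u : W ⟶ V => ⟨W, e.append (single u)⟩
  | comp {X Y X' Y' : C} {S : (Y' ⟶ X') → CycChain C} (hS : IsSlot S)
      (α : (Y ⟶ X) →ₗ[ℂ] (Y' ⟶ X')) : IsSlot fun u => S (α u)

theorem IsSlot.congr {X Y : C} {S T : (Y ⟶ X) → CycChain C} (hS : IsSlot S)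
    (h : ∀ u, S u = T u) : IsSlot T :=
  funext h ▸ hS

theorem IsSlot.exists_size_eq {X Y : C} {S : (Y ⟶ X) → CycChain C} (hS : IsSlot S) :
    ∃ m, ∀ u, (S u).2.size = m := by
  induction hS with
  | single => exact ⟨1, fun _ => by rw [size]⟩
  | head c => exact ⟨c.size + 1, fun _ => by rw [size]⟩
  | inner e d => exact ⟨e.size + (d.size + 1), fun _ => by rw [size_append, size]⟩
  | last e => exact ⟨e.size + 1, fun _ => by rw [size_append, size]⟩
  | comp _ α ih => exact ih.imp fun m hm u => hm (α u)

def PreservesSlots (F : CycChain C → CycChain C) : Prop :=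
  ∀ ⦃X Y : C⦄ ⦃S : (Y ⟶ X) → CycChain C⦄, IsSlot S → IsSlot fun u => F (S u)

theorem PreservesSlots.iterate {F : CycChain C → CycChain C} (hF : PreservesSlots F) (k : ℕ) :
    PreservesSlots F^[k] := by
  induction k with
  | zero => exact fun _ _ _ hS => hS
  | succ k ih =>
    exact fun _ _ _ hS => (hF (ih hS)).congr fun _ => (Function.iterate_succ_apply' F k _).symm

theorem preservesSlots_rotInv : PreservesSlots (rotInv : CycChain C → CycChain C) := by
  intro X Y S hS
  induction hS with
  | single => exact IsSlot.single
  | head c => exact (IsSlot.last c).congr fun u => by rw [rotInv_cons, snoc_eq_append]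
  | inner e d =>
    cases e with
    | single f => exact (IsSlot.head (d.snoc f)).congr fun u => by simp [rotInv_cons, append, snoc]
    | cons f e =>
      exact (IsSlot.inner e (d.snoc f)).congr fun u => by
        simp [rotInv_cons, append, append_snoc, snoc]
  | last e =>
    cases e with
    | single f => exact (IsSlot.head (single f)).congr fun u => by simp [rotInv_cons, append, snoc]
    | cons f e =>
      exact (IsSlot.inner e (single f)).congr fun u => by
        simp [rotInv_cons, append, append_snoc, snoc]
  | comp _ α ih => exact ih.comp α

theorem preservesSlots_rot : PreservesSlots (rot : CycChain C → CycChain C) := by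
  intro X Y S hS
  obtain ⟨m, hm⟩ := hS.exists_size_eq
  exact (preservesSlots_rotInv.iterate (m - 1) hS).congr fun u => by rw [rot, hm]

theorem preservesSlots_consId : PreservesSlots (consId : CycChain C → CycChain C) := by
  intro X Y S hS
  induction hS with
  | single => exact IsSlot.last (single (𝟙 _))
  | head c => exact IsSlot.inner (single (𝟙 _)) c
  | inner e d => exact IsSlot.inner (cons (𝟙 _) e) d
  | last e => exact IsSlot.last (cons (𝟙 _) e)
  | comp _ α ih => exact ih.comp α

theorem preservesSlots_snocId : PreservesSlots (snocId : CycChain C → CycChain C) :=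
  fun _ _ _ hS => preservesSlots_rotInv (preservesSlots_consId hS)

theorem preservesSlots_composeHead :
    PreservesSlots (composeHead : CycChain C → CycChain C) := by
  intro X Y S hS
  induction hS with
  | single => exact IsSlot.single.congr fun u => by simp [composeHead, composeAt]
  | head c =>
    cases c with
    | single g =>
      exact (IsSlot.single.comp (Linear.leftComp ℂ _ g)).congr fun u => by
        simp [composeHead, composeAt]
    | cons g d =>
      exact ((IsSlot.head d).comp (Linear.leftComp ℂ _ g)).congr fun u => by
        simp [composeHead, composeAt]
  | inner e d =>
    rcases e with f | ⟨f, g | ⟨g, e⟩⟩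
    · exact ((IsSlot.head d).comp (Linear.rightComp ℂ _ f)).congr fun u => by
        simp [composeHead, composeAt, append]
    · exact (IsSlot.inner (single (g ≫ f)) d).congr fun u => by
        simp [composeHead, composeAt, append]
    · exact (IsSlot.inner (cons (g ≫ f) e) d).congr fun u => by
        simp [composeHead, composeAt, append]
  | last e =>
    rcases e with f | ⟨f, g | ⟨g, e⟩⟩
    · exact (IsSlot.single.comp (Linear.rightComp ℂ _ f)).congr fun u => by
        simp [composeHead, composeAt, append]
    · exact (IsSlot.last (single (g ≫ f))).congr fun u => by simp [composeHead, composeAt, append]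
    · exact (IsSlot.last (cons (g ≫ f) e)).congr fun u => by simp [composeHead, composeAt, append]
  | comp _ α ih => exact ih.comp α

end Slots

section Cochains

variable [Preadditive C] [Linear ℂ C]

def LinearAlong (φ : Cochain C) {X Y : C} (S : (Y ⟶ X) → CycChain C) : Prop :=
  ∃ L : (Y ⟶ X) →ₗ[ℂ] ℂ, ∀ u, φ (S u) = L u

theorem multilinAt0_of_linearAlong {φ : Cochain C}
    (hcons : ∀ {X Y : C} (c : Chain C X Y), LinearAlong φ fun u => ⟨X, cons u c⟩)
    (hsingle : ∀ {X : C}, LinearAlong φ fun u : X ⟶ X => ⟨X, single u⟩) : MultilinAt0 φ := by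
  refine ⟨fun f g c => ?_, fun a f c => ?_, fun {X} f g => ?_, fun {X} a f => ?_⟩
  · obtain ⟨L, hL⟩ := hcons c
    simp only [hL, map_add]
  · obtain ⟨L, hL⟩ := hcons c
    simp only [hL, map_smul, smul_eq_mul]
  · obtain ⟨L, hL⟩ := hsingle (X := X)
    simp only [hL, map_add]
  · obtain ⟨L, hL⟩ := hsingle (X := X)
    simp only [hL, map_smul, smul_eq_mul]

theorem IsCochain.linearAlong_of_eq {φ : Cochain C} (h : IsCochain φ) (k : ℕ) {X Y : C}
    (c : Chain C X Y) {S : (Y ⟶ X) → CycChain C} (hS : ∀ u, S u = rotInv^[k] ⟨X, cons u c⟩) :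
    LinearAlong φ S :=
  ⟨IsLinearMap.mk' _ ⟨fun f g => (h k).1 f g c, fun a f => (h k).2.1 a f c⟩,
    fun u => congrArg φ (hS u)⟩

theorem isCochain_iff_linearAlong {φ : Cochain C} :
    IsCochain φ ↔ ∀ ⦃X Y : C⦄ ⦃S : (Y ⟶ X) → CycChain C⦄, IsSlot S → LinearAlong φ S := by
  refine ⟨fun h X Y S hS => ?_, fun h k => multilinAt0_of_linearAlong
    (fun c => h (preservesSlots_rotInv.iterate k (.head c)))
    (h (preservesSlots_rotInv.iterate k .single))⟩
  induction hS with
  | single => exact ⟨IsLinearMap.mk' _ ⟨(h 0).2.2.1, (h 0).2.2.2⟩, fun _ => rfl⟩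
  | head c => exact h.linearAlong_of_eq 0 c fun _ => rfl
  | inner e d =>
    exact h.linearAlong_of_eq (d.size + 1) (d.append e) fun u => by
      rw [← rotInv_iterate_append (cons u d) e, size, append]
  | last e =>
    exact h.linearAlong_of_eq 1 e fun u => by
      rw [← rotInv_iterate_append (single u) e, size, append]
  | comp _ α ih =>
    obtain ⟨L, hL⟩ := ih
    exact ⟨L.comp α, fun u => hL (α u)⟩

theorem LinearAlong.const_mul {φ : Cochain C} {X Y : C} {S : (Y ⟶ X) → CycChain C}
    (a : ℂ) (h : LinearAlong φ S) : LinearAlong (fun t => a * φ t) S := by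
  obtain ⟨L, hL⟩ := h
  exact ⟨a • L, fun u => by simp [hL]⟩

theorem LinearAlong.sub {φ ψ : Cochain C} {X Y : C} {S : (Y ⟶ X) → CycChain C}
    (hφ : LinearAlong φ S) (hψ : LinearAlong ψ S) : LinearAlong (fun t => φ t - ψ t) S := by
  obtain ⟨L, hL⟩ := hφ
  obtain ⟨M, hM⟩ := hψ
  exact ⟨L - M, fun u => by simp [hL, hM]⟩

theorem LinearAlong.sum {ι : Type*} (s : Finset ι) {φ : ι → Cochain C} {X Y : C}
    {S : (Y ⟶ X) → CycChain C} (h : ∀ i ∈ s, LinearAlong (φ i) S) :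
    LinearAlong (fun t => ∑ i ∈ s, φ i t) S := by
  choose! L hL using h
  exact ⟨∑ i ∈ s, L i, fun u => by
    rw [LinearMap.sum_apply]; exact Finset.sum_congr rfl fun i hi => hL i hi u⟩

theorem IsCochain.const_mul {φ : Cochain C} (a : ℂ) (h : IsCochain φ) :
    IsCochain fun t => a * φ t :=
  isCochain_iff_linearAlong.2 fun _ _ _ hS => (isCochain_iff_linearAlong.1 h hS).const_mul a

theorem IsCochain.sub {φ ψ : Cochain C} (hφ : IsCochain φ) (hψ : IsCochain ψ) :
    IsCochain fun t => φ t - ψ t :=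
  isCochain_iff_linearAlong.2 fun _ _ _ hS =>
    (isCochain_iff_linearAlong.1 hφ hS).sub (isCochain_iff_linearAlong.1 hψ hS)

theorem IsCochain.sum {ι : Type*} (s : Finset ι) {φ : ι → Cochain C}
    (h : ∀ i ∈ s, IsCochain (φ i)) : IsCochain fun t => ∑ i ∈ s, φ i t :=
  isCochain_iff_linearAlong.2 fun _ _ _ hS =>
    LinearAlong.sum s fun i hi => isCochain_iff_linearAlong.1 (h i hi) hS

theorem IsCochain.comp {φ : Cochain C} (h : IsCochain φ) {F : CycChain C → CycChain C}
    (hF : PreservesSlots F) : IsCochain fun t => φ (F t) :=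
  isCochain_iff_linearAlong.2 fun _ _ _ hS => isCochain_iff_linearAlong.1 h (hF hS)

theorem IsCochain.lamOp {φ : Cochain C} (h : IsCochain φ) (n : ℕ) : IsCochain (lamOp n φ) :=
  (h.comp preservesSlots_rot).const_mul _

theorem IsCochain.aOp {φ : Cochain C} (h : IsCochain φ) (n : ℕ) : IsCochain (AOp n φ) :=
  IsCochain.sum (φ := fun k t => (-1) ^ (n * k) * φ (rot^[k] t)) _ fun k _ =>
    (h.comp (preservesSlots_rot.iterate k)).const_mul _

theorem IsCochain.b0Op {φ : Cochain C} (h : IsCochain φ) (n : ℕ) : IsCochain (B0Op n φ) :=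
  (h.comp preservesSlots_consId).sub ((h.comp preservesSlots_snocId).const_mul _)

end Cochains

section Operators

variable {n : ℕ}

theorem lamOp_AOp (χ : Cochain C) {t : CycChain C} (ht : t.2.size = n + 1) :
    lamOp n (AOp n χ) t = AOp n χ t := by
  set g : ℕ → ℂ := fun k => (-1) ^ (n * k) * χ (rot^[k] t)
  have hperiod : g (n + 1) = g 0 := by
    have hfull : rot^[n + 1] t = t := ht ▸ rot_iterate_size t
    simp only [g, hfull, Even.neg_one_pow (Nat.even_mul_succ_self n), mul_zero, pow_zero,
      Function.iterate_zero_apply]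
  have hshift : lamOp n (AOp n χ) t = ∑ k ∈ Finset.range (n + 1), g (k + 1) := by
    simp only [lamOp, AOp, Finset.mul_sum, g, Function.iterate_succ_apply]
    refine Finset.sum_congr rfl fun k _ => ?_
    ring
  have hsum := (Finset.sum_range_succ' g (n + 1)).symm.trans (Finset.sum_range_succ g (n + 1))
  rw [hperiod] at hsum
  exact hshift.trans (add_right_cancel hsum)

theorem AOp_congr {χ ξ : Cochain C} (h : ∀ s : CycChain C, s.2.size = n + 1 → χ s = ξ s)
    {t : CycChain C} (ht : t.2.size = n + 1) : AOp n χ t = AOp n ξ t :=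
  Finset.sum_congr rfl fun k _ => by rw [h _ ((size_rot_iterate k t).trans ht)]

theorem AOp_const_mul (a : ℂ) (χ : Cochain C) (t : CycChain C) :
    AOp n (fun s => a * χ s) t = a * AOp n χ t := by
  simp only [AOp, Finset.mul_sum]
  exact Finset.sum_congr rfl fun k _ => mul_left_comm _ _ _

theorem neg_one_pow_mul_rot_iterate_of_cyclic {φ : Cochain C}
    (hφ : ∀ s : CycChain C, s.2.size = n + 1 → lamOp n φ s = φ s) (k : ℕ) {t : CycChain C}
    (ht : t.2.size = n + 1) : (-1) ^ (n * k) * φ (rot^[k] t) = φ t := by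
  induction k generalizing t with
  | zero => simp
  | succ k ih =>
    rw [Function.iterate_succ_apply, mul_add_one, pow_add, mul_right_comm,
      ih ((size_rot t).trans ht), mul_comm]
    exact hφ t ht

theorem AOp_apply_of_cyclic {φ : Cochain C}
    (hφ : ∀ s : CycChain C, s.2.size = n + 1 → lamOp n φ s = φ s) {t : CycChain C}
    (ht : t.2.size = n + 1) : AOp n φ t = ((n : ℂ) + 1) * φ t := by
  simp only [AOp]
  rw [Finset.sum_congr rfl fun k _ => neg_one_pow_mul_rot_iterate_of_cyclic hφ k ht]
  simp

theorem B0Op_lamOp_composeHead (φ : Cochain C) (t : CycChain C) :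
    B0Op n (lamOp n fun s => φ (composeHead s)) t = lamOp n φ t + φ t := by
  change (-1) ^ n * φ (composeHead (rot (consId t)))
      - (-1) ^ (n + 1) * ((-1) ^ n * φ (composeHead (rot (snocId t)))) = (-1) ^ n * φ (rot t) + φ t
  rw [composeHead_rot_consId, rot_snocId, composeHead_consId]
  have hsq : ((-1 : ℂ) ^ n) ^ 2 = 1 := by rw [← pow_mul, mul_comm, pow_mul]; norm_num
  linear_combination φ t * hsq

end Operators

/-- The image of `B = A ∘ B₀ : CN^{n+1}(C) → CN^n(C)` is exactly
`C^n_λ(C) = Ker(1 - λₙ)`:  every `Bψ` is a cyclic cochain, and conversely for every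
cyclic `φ ∈ C^n_λ(C)` there is `ψ ∈ CN^{n+1}(C)` with `Bψ = 2(n+1)φ`
(so in particular `φ ∈ Im B`). -/
theorem image_B_eq_cyclic [Preadditive C] [CategoryTheory.Linear ℂ C] (n : ℕ) :
    -- `Im B ⊆ C^n_λ(C)`:
    (∀ ψ : Cochain C, ∀ t : CycChain C, t.2.size = n + 1 →
        lamOp n (BOp n ψ) t = BOp n ψ t) ∧
    (∀ ψ : Cochain C, IsCochain ψ → IsCochain (BOp n ψ)) ∧
    -- `C^n_λ(C) ⊆ Im B`, with `Bψ = 2(n+1)φ`: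
    (∀ φ : Cochain C, IsCochain φ →
      (∀ t : CycChain C, t.2.size = n + 1 → lamOp n φ t = φ t) →
      ∃ ψ : Cochain C, IsCochain ψ ∧
        ∀ t : CycChain C, t.2.size = n + 1 →
          BOp n ψ t = 2 * ((n : ℂ) + 1) * φ t) := by
  refine ⟨fun ψ t ht => lamOp_AOp _ ht, fun ψ hψ => (hψ.b0Op n).aOp n, fun φ hφ hcyc => ?_⟩
  refine ⟨lamOp n fun s => φ (composeHead s), (hφ.comp preservesSlots_composeHead).lamOp n,
    fun t ht => ?_⟩
  have hB0 : ∀ s : CycChain C, s.2.size = n + 1 →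
      B0Op n (lamOp n fun s => φ (composeHead s)) s = 2 * φ s := fun s hs => by
    rw [B0Op_lamOp_composeHead, hcyc s hs, two_mul]
  calc BOp n _ t = AOp n (fun s => 2 * φ s) t := AOp_congr hB0 ht
    _ = 2 * (((n : ℂ) + 1) * φ t) := by rw [AOp_const_mul, AOp_apply_of_cyclic hcyc ht]
    _ = 2 * ((n : ℂ) + 1) * φ t := (mul_assoc _ _ _).symm

end CFM
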